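/- arXiv:2605.23735 — 2 statements merged into one kernel-verified Lean document; each statement's English description precedes it below -/
import Mathlib

section
/- If S is a densely defined closed linear operator from H to K and C is a conjugation on K, then the double antilinear adjoint of CS equals CS, i.e., ((CS)^♯)^♯ = CS. -/
open Classical
noncomputable section

variable {H K : Type*}
  [NormedAddCommGroup H] [InnerProductSpace ℂ H] [CompleteSpace H]
  [NormedAddCommGroup K] [InnerProductSpace ℂ K] [CompleteSpace K]

/-- `D` is a complex linear subspace of `H` (as a set). -/
def IsLinSubspace (D : Set H) : Prop :=
  (0 : H) ∈ D ∧ ∀ (a : ℂ) (x y : H), x ∈ D → y ∈ D → a • x + y ∈ D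

/-- `f` is (complex) linear on `D`. -/
def LinearOn (D : Set H) (f : H → K) : Prop :=
  ∀ (a : ℂ) (x y : H), x ∈ D → y ∈ D → f (a • x + y) = a • f x + f y

/-- `f` is antilinear (conjugate-linear) on `D`. -/
def AntilinearOn (D : Set H) (f : H → K) : Prop :=
  ∀ (a : ℂ) (x y : H), x ∈ D → y ∈ D → f (a • x + y) = (starRingEnd ℂ a) • f x + f y

/-- The operator with domain `D` given by `f` has closed graph, i.e. is a closed operator. -/
def HasClosedGraph (D : Set H) (f : H → K) : Prop :=
  IsClosed {p : H × K | p.1 ∈ D ∧ f p.1 = p.2}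

/-- `C` is a conjugation on `K`: an isometric antilinear involution. -/
def IsConjugation (C : K → K) : Prop :=
  (∀ (a : ℂ) (x y : K), C (a • x + y) = (starRingEnd ℂ a) • C x + C y) ∧
  (∀ x, C (C x) = x) ∧
  ∀ x y : K, (inner ℂ (C x) (C y) : ℂ) = inner ℂ y x

/-- Domain of the (linear) Hilbert space adjoint of the operator `(D, f)`. -/
def adjDom (D : Set H) (f : H → K) : Set K :=
  {y | ∃ u : H, ∀ x ∈ D, (inner ℂ (f x) y : ℂ) = inner ℂ x u}

/-- The (linear) Hilbert space adjoint of the operator `(D, f)`; `0` outside its domain.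
For a densely defined operator the vector `u` below is unique. -/
def adjFun (D : Set H) (f : H → K) : K → H := fun y =>
  if h : ∃ u : H, ∀ x ∈ D, (inner ℂ (f x) y : ℂ) = inner ℂ x u then h.choose else 0

/-- Domain of the antilinear adjoint `T^♯` of the operator `(D, f)`:
`y ∈ D(T^♯)` iff there is `u` with `conj ⟪f x, y⟫ = ⟪x, u⟫` for all `x ∈ D`. -/
def sharpDom (D : Set H) (f : H → K) : Set K :=
  {y | ∃ u : H, ∀ x ∈ D, (starRingEnd ℂ) (inner ℂ (f x) y : ℂ) = inner ℂ x u}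

/-- The antilinear adjoint `T^♯`; `0` outside its domain.
For a densely defined operator the vector `u` below is unique. -/
def sharpFun (D : Set H) (f : H → K) : K → H := fun y =>
  if h : ∃ u : H, ∀ x ∈ D, (starRingEnd ℂ) (inner ℂ (f x) y : ℂ) = inner ℂ x u then h.choose
  else 0

/-- Orthogonal complement (as a set) of a set. -/
def perpSet (S : Set K) : Set K := {y | ∀ z ∈ S, (inner ℂ z y : ℂ) = 0}


/-!
For a conjugation `C` one has `conj ⟪C a, y⟫ = ⟪a, C y⟫`, so `(CS)^♯ = S^* ∘ C` with domain
`C D(S^*)`. Unwinding the definition once more, `(x, u)` lies in the graph of `(CS)^♯♯` iff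
`⟪h, x⟫ = ⟪z, C u⟫` for every `(z, h)` in the graph of `S^*`, i.e. iff `(x, C u)` is orthogonal
to `G(S)^⊥ = {(-h, z)}`. Since `S` is closed, `G(S)^⊥⊥ = G(S)`, so this means `x ∈ D(S)` and
`u = C S x`.
-/

open scoped InnerProductSpace ComplexConjugate

section Adjoint

variable {E F : Type*} [NormedAddCommGroup E] [InnerProductSpace ℂ E]
  [NormedAddCommGroup F] [InnerProductSpace ℂ F] {D : Set E} {f : E → F}

/-- `(z, h)` lies in the graph of the adjoint of the operator `(D, f)`. -/
def IsAdjointPair (D : Set E) (f : E → F) (z : F) (h : E) : Prop :=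
  ∀ x ∈ D, ⟪f x, z⟫_ℂ = ⟪x, h⟫_ℂ

lemma LinearOn.map_zero (hD : IsLinSubspace D) (hf : LinearOn D f) : f 0 = 0 := by
  simpa using hf 1 0 0 hD.1 hD.1

def graphSubmodule (hD : IsLinSubspace D) (hf : LinearOn D f) :
    Submodule ℂ (WithLp 2 (E × F)) where
  carrier := {p | p.ofLp.1 ∈ D ∧ f p.ofLp.1 = p.ofLp.2}
  zero_mem' := ⟨hD.1, hf.map_zero hD⟩
  add_mem' := by
    rintro p q ⟨hp, hfp⟩ ⟨hq, hfq⟩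
    refine ⟨by simpa using hD.2 1 _ _ hp hq, ?_⟩
    simp only [WithLp.ofLp_add, Prod.fst_add, Prod.snd_add, ← hfp, ← hfq]
    simpa using hf 1 _ _ hp hq
  smul_mem' := by
    rintro c p ⟨hp, hfp⟩
    refine ⟨by simpa using hD.2 c _ 0 hp hD.1, ?_⟩
    simp only [WithLp.ofLp_smul, Prod.smul_fst, Prod.smul_snd, ← hfp]
    simpa [hf.map_zero hD] using hf c _ 0 hp hD.1

lemma isAdjointPair_of_mem_orthogonal_graph {hD : IsLinSubspace D} {hf : LinearOn D f}
    {q : WithLp 2 (E × F)} (hq : q ∈ (graphSubmodule hD hf)ᗮ) :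
    IsAdjointPair D f q.ofLp.2 (-q.ofLp.1) := by
  intro x hx
  have h := (Submodule.mem_orthogonal _ q).1 hq (WithLp.toLp 2 (x, f x)) ⟨hx, rfl⟩
  rw [WithLp.prod_inner_apply] at h
  rw [inner_neg_right]
  linear_combination (h : ⟪x, q.ofLp.1⟫_ℂ + ⟪f x, q.ofLp.2⟫_ℂ = 0)

/-- A closed operator contains its double adjoint: `G(S)^⊥⊥ = G(S)`. -/
lemma HasClosedGraph.mem_of_forall_isAdjointPair [CompleteSpace E] [CompleteSpace F]
    (hD : IsLinSubspace D) (hf : LinearOn D f) (hclosed : HasClosedGraph D f) {x : E} {w : F}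
    (hxw : ∀ z h, IsAdjointPair D f z h → ⟪h, x⟫_ℂ = ⟪z, w⟫_ℂ) :
    x ∈ D ∧ f x = w := by
  set G := graphSubmodule hD hf
  have hG : IsClosed (G : Set (WithLp 2 (E × F))) :=
    hclosed.preimage (WithLp.prod_continuous_ofLp 2 E F)
  have : CompleteSpace G := hG.completeSpace_coe
  suffices WithLp.toLp 2 (x, w) ∈ Gᗮᗮ by rwa [G.orthogonal_orthogonal] at this
  refine (Submodule.mem_orthogonal _ _).2 fun q hq => ?_
  have h := hxw _ _ (isAdjointPair_of_mem_orthogonal_graph hq)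
  rw [inner_neg_left] at h
  rw [WithLp.prod_inner_apply]
  linear_combination -h

lemma sharpFun_spec {y : F} (hy : y ∈ sharpDom D f) :
    ∀ x ∈ D, conj ⟪f x, y⟫_ℂ = ⟪x, sharpFun D f y⟫_ℂ := by
  have hy' : ∃ u : E, ∀ x ∈ D, conj ⟪f x, y⟫_ℂ = ⟪x, u⟫_ℂ := hy
  rw [sharpFun, dif_pos hy']
  exact hy'.choose_spec

lemma sharpFun_eq_of_forall (hD : Dense D) {y : F} {u : E}
    (hu : ∀ x ∈ D, conj ⟪f x, y⟫_ℂ = ⟪x, u⟫_ℂ) : sharpFun D f y = u :=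
  Dense.eq_of_inner_right ℂ hD fun x hx => by rw [← sharpFun_spec ⟨u, hu⟩ x hx, hu x hx]

lemma IsConjugation.conj_inner_apply_left {C : F → F} (hC : IsConjugation C) (a y : F) :
    conj ⟪C a, y⟫_ℂ = ⟪a, C y⟫_ℂ := by
  rw [inner_conj_symm, ← hC.2.2 (C a) y, hC.2.1]

variable {C : F → F}

lemma IsConjugation.forall_conj_inner_comp_iff (hC : IsConjugation C) {y : F} {u : E} :
    (∀ x ∈ D, conj ⟪C (f x), y⟫_ℂ = ⟪x, u⟫_ℂ) ↔ IsAdjointPair D f (C y) u := by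
  simp only [IsAdjointPair, hC.conj_inner_apply_left]

lemma IsConjugation.mem_sharpDom_comp_iff (hC : IsConjugation C) {y : F} :
    y ∈ sharpDom D (fun x => C (f x)) ↔ ∃ u, IsAdjointPair D f (C y) u :=
  exists_congr fun _ => hC.forall_conj_inner_comp_iff

lemma IsConjugation.sharpFun_comp_apply (hC : IsConjugation C) (hD : Dense D) {z : F} {h : E}
    (hzh : IsAdjointPair D f z h) : sharpFun D (fun x => C (f x)) (C z) = h :=
  sharpFun_eq_of_forall hD (hC.forall_conj_inner_comp_iff.2 (by rwa [hC.2.1]))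

lemma IsConjugation.forall_conj_inner_sharpFun_comp_iff [CompleteSpace E] [CompleteSpace F]
    (hC : IsConjugation C) (hD : IsLinSubspace D) (hf : LinearOn D f) (hdense : Dense D)
    (hclosed : HasClosedGraph D f) {x : E} {u : F} :
    (∀ y ∈ sharpDom D (fun x => C (f x)),
        conj ⟪sharpFun D (fun x => C (f x)) y, x⟫_ℂ = ⟪y, u⟫_ℂ) ↔
      x ∈ D ∧ C (f x) = u := by
  constructor
  · intro hu
    obtain ⟨hx, hfx⟩ : x ∈ D ∧ f x = C u :=
      hclosed.mem_of_forall_isAdjointPair hD hf fun z h hzh => by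
        have hCz : C z ∈ sharpDom D (fun x => C (f x)) :=
          hC.mem_sharpDom_comp_iff.2 ⟨h, by rwa [hC.2.1]⟩
        have hzu := hu (C z) hCz
        rw [hC.sharpFun_comp_apply hdense hzh] at hzu
        rw [← hC.conj_inner_apply_left, ← hzu, Complex.conj_conj]
    exact ⟨hx, by rw [hfx, hC.2.1]⟩
  · rintro ⟨hx, rfl⟩ y hy
    rw [inner_conj_symm, ← sharpFun_spec hy x hx, hC.conj_inner_apply_left,
      ← hC.conj_inner_apply_left, inner_conj_symm]

end Adjoint

/-- For `S` densely defined closed linear from `H` to `K` and `C` a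
conjugation on `K`, the double antilinear adjoint of `CS` equals `CS`. -/
theorem double_sharp_eq_self
    (DS : Set H) (S : H → K) (C : K → K)
    (hsub : IsLinSubspace DS) (hlin : LinearOn DS S) (hdense : Dense DS)
    (hclosed : HasClosedGraph DS S) (hC : IsConjugation C) :
    sharpDom (sharpDom DS (fun x => C (S x))) (sharpFun DS (fun x => C (S x))) = DS ∧
    ∀ x ∈ DS,
      sharpFun (sharpDom DS (fun x => C (S x))) (sharpFun DS (fun x => C (S x))) x
        = C (S x) := by
  have graph_iff := fun {x} {u} =>
    hC.forall_conj_inner_sharpFun_comp_iff hsub hlin hdense hclosed (x := x) (u := u)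
  have hdom : sharpDom (sharpDom DS (fun x => C (S x))) (sharpFun DS (fun x => C (S x))) = DS :=
    Set.ext fun x => ⟨fun ⟨_, hu⟩ => (graph_iff.1 hu).1, fun hx => ⟨_, graph_iff.2 ⟨hx, rfl⟩⟩⟩
  exact ⟨hdom, fun x hx => (graph_iff.1 (sharpFun_spec (hdom.symm ▸ hx))).2.symm⟩
end
end

section
/- Let T be a densely defined closed antilinear operator from H to K. Then (T†)† = T, where T† is the Moore–Penrose inverse of T. -/
open Classical
noncomputable section

variable {H K : Type*}
  [NormedAddCommGroup H] [InnerProductSpace ℂ H] [CompleteSpace H]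
  [NormedAddCommGroup K] [InnerProductSpace ℂ K] [CompleteSpace K]

/-- The orthogonal complement of the kernel `N(T)` of the operator `T = (D, f)`. -/
def nullPerp (D : Set H) (f : H → K) : Set H := perpSet {x : H | x ∈ D ∧ f x = 0}

/-- Domain `R(T) ⊕ R(T)^⊥` of the Moore–Penrose inverse of `T = (D, f)`. -/
def pinvDom (D : Set H) (f : H → K) : Set K :=
  {y : K | ∃ r ∈ f '' D, ∃ p ∈ perpSet (f '' D), y = r + p}

/-- The Moore–Penrose inverse of `T = (D, f)`: for `y = y₁ + y₂` with `y₁ ∈ R(T)` and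
`y₂ ∈ R(T)^⊥`, it is the unique `x ∈ N(T)^⊥ ∩ D(T)` with `f x = y₁` (and it is `0` outside
`R(T) ⊕ R(T)^⊥`; such an `x` is unique for a closed operator). -/
def pinvFun (D : Set H) (f : H → K) : K → H := fun y =>
  if h : ∃ x, x ∈ D ∧ x ∈ nullPerp D f ∧ f x - y ∈ perpSet (f '' D) then h.choose else 0

/-!
Let `N = N(T)` and `M = D(T) ∩ N^⊥`. Because `T` is closed, `N` is a closed subspace, so every
`x ∈ D(T)` splits as `x = n + z` with `n ∈ N` and `z ∈ M`; this gives `D(T) = N + M`, and, since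
`D(T)` is dense, `M^⊥ = N`. The pseudoinverse `T†` is antilinear, maps `D(T†)` onto `M` and has
kernel `R(T)^⊥`. Hence `D(T††) = M + M^⊥ = M + N = D(T)`, and for `x = n + z ∈ D(T)` the vector
`Tx` lies in `N(T†)^⊥ = R(T)^⊥⊥` and satisfies `T†(Tx) - x = z - x ∈ N = M^⊥`, which is exactly
the condition that characterizes `T††x = Tx`.
-/

def opKer {E F : Type*} [Zero F] (D : Set E) (f : E → F) : Set E := {x | x ∈ D ∧ f x = 0}

theorem apply_mem_pinvDom {E F : Type*} [NormedAddCommGroup F] [InnerProductSpace ℂ F]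
    {D : Set E} {f : E → F} {x : E} (hx : x ∈ D) : f x ∈ pinvDom D f :=
  ⟨f x, ⟨x, hx, rfl⟩, 0, fun z _ => inner_zero_right z, (add_zero _).symm⟩

section

variable {E F : Type*} [NormedAddCommGroup E] [NormedAddCommGroup F]

theorem isClosed_opKer {D : Set E} {f : E → F} (hclosed : HasClosedGraph D f) :
    IsClosed (opKer D f) :=
  hclosed.preimage (by fun_prop : Continuous fun x : E => (x, (0 : F)))

variable [InnerProductSpace ℂ E] [InnerProductSpace ℂ F]

def perpSubmodule (S : Set E) : Submodule ℂ E where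
  carrier := perpSet S
  add_mem' hx hy z hz := by rw [inner_add_right, hx z hz, hy z hz, add_zero]
  zero_mem' z _ := inner_zero_right z
  smul_mem' a x hx z hz := by rw [inner_smul_right, hx z hz, mul_zero]

@[simp]
theorem mem_perpSubmodule {S : Set E} {x : E} : x ∈ perpSubmodule S ↔ x ∈ perpSet S := Iff.rfl

theorem eq_zero_of_mem_of_mem_perpSet {S : Set E} {x : E} (hxS : x ∈ S) (hx : x ∈ perpSet S) :
    x = 0 :=
  inner_self_eq_zero.mp (hx x hxS)

theorem inner_eq_zero_of_mem_perpSet {S : Set E} {x z : E} (hx : x ∈ perpSet S) (hz : z ∈ S) :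
    (inner ℂ x z : ℂ) = 0 := by
  rw [← inner_conj_symm, hx z hz, map_zero]

theorem mem_perpSet_perpSet {S : Set E} {x : E} (hx : x ∈ S) : x ∈ perpSet (perpSet S) :=
  fun _ hz => inner_eq_zero_of_mem_perpSet hz hx

theorem eq_zero_of_mem_perpSet_of_dense {S : Set E} (hS : Dense S) {w : E}
    (hw : w ∈ perpSet S) : w = 0 := by
  have h : (fun x : E => (inner ℂ x w : ℂ)) = fun _ => 0 :=
    Continuous.ext_on hS (by fun_prop) continuous_const hw
  exact inner_self_eq_zero.mp (congrFun h w)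

def IsLinSubspace.toSubmodule {D : Set E} (hsub : IsLinSubspace D) : Submodule ℂ E where
  carrier := D
  add_mem' hx hy := by simpa using hsub.2 1 _ _ hx hy
  zero_mem' := hsub.1
  smul_mem' a x hx := by simpa using hsub.2 a x 0 hx hsub.1

@[simp]
theorem IsLinSubspace.mem_toSubmodule {D : Set E} (hsub : IsLinSubspace D) {x : E} :
    x ∈ hsub.toSubmodule ↔ x ∈ D := Iff.rfl

namespace AntilinearOn

variable {D : Set E} {f : E → F}

theorem map_zero (hsub : IsLinSubspace D) (hanti : AntilinearOn D f) : f 0 = 0 := by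
  simpa using hanti 1 0 0 hsub.1 hsub.1

theorem map_add (hanti : AntilinearOn D f) {x y : E} (hx : x ∈ D) (hy : y ∈ D) :
    f (x + y) = f x + f y := by
  simpa using hanti 1 x y hx hy

theorem map_sub (hanti : AntilinearOn D f) {x y : E} (hx : x ∈ D) (hy : y ∈ D) :
    f (x - y) = f x - f y := by
  simpa [sub_eq_neg_add] using hanti (-1) y x hy hx

theorem map_smul (hsub : IsLinSubspace D) (hanti : AntilinearOn D f) (a : ℂ) {x : E}
    (hx : x ∈ D) : f (a • x) = starRingEnd ℂ a • f x := by
  simpa [hanti.map_zero hsub] using hanti a x 0 hx hsub.1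

end AntilinearOn

section Operator

variable {D : Set E} {f : E → F}

def opKerSubmodule (hsub : IsLinSubspace D) (hanti : AntilinearOn D f) : Submodule ℂ E where
  carrier := opKer D f
  add_mem' hx hy := ⟨hsub.toSubmodule.add_mem hx.1 hy.1, by
    rw [hanti.map_add hx.1 hy.1, hx.2, hy.2, add_zero]⟩
  zero_mem' := ⟨hsub.1, hanti.map_zero hsub⟩
  smul_mem' a x hx := ⟨hsub.toSubmodule.smul_mem a hx.1, by
    rw [hanti.map_smul hsub a hx.1, hx.2, smul_zero]⟩

theorem exists_add_mem_opKer_mem_nullPerp [CompleteSpace E] (hsub : IsLinSubspace D)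
    (hanti : AntilinearOn D f) (hclosed : HasClosedGraph D f) (x : E) :
    ∃ n ∈ opKer D f, ∃ z ∈ nullPerp D f, x = n + z := by
  have : CompleteSpace (opKerSubmodule hsub hanti) := (isClosed_opKer hclosed).completeSpace_coe
  obtain ⟨n, hn, z, hz, rfl⟩ :=
    Submodule.exists_add_mem_mem_orthogonal (K := opKerSubmodule hsub hanti) x
  exact ⟨n, hn, z, (Submodule.mem_orthogonal _ z).1 hz, rfl⟩

theorem mem_iff_exists_add [CompleteSpace E] (hsub : IsLinSubspace D)
    (hanti : AntilinearOn D f) (hclosed : HasClosedGraph D f) {x : E} :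
    x ∈ D ↔ ∃ z ∈ D ∩ nullPerp D f, ∃ n ∈ opKer D f, x = z + n := by
  constructor
  · intro hx
    obtain ⟨n, hn, z, hz, rfl⟩ := exists_add_mem_opKer_mem_nullPerp hsub hanti hclosed x
    have hzD : z ∈ D := by simpa using hsub.toSubmodule.sub_mem hx hn.1
    exact ⟨z, ⟨hzD, hz⟩, n, hn, add_comm n z⟩
  · rintro ⟨z, hz, n, hn, rfl⟩
    exact hsub.toSubmodule.add_mem hz.1 hn.1

def IsPinvValue (D : Set E) (f : E → F) (y : F) (x : E) : Prop :=
  x ∈ D ∧ x ∈ nullPerp D f ∧ f x - y ∈ perpSet (f '' D)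

theorem IsPinvValue.unique (hsub : IsLinSubspace D) (hanti : AntilinearOn D f) {y : F} {x x' : E}
    (hx : IsPinvValue D f y x) (hx' : IsPinvValue D f y x') : x = x' := by
  have hdD : x - x' ∈ D := hsub.toSubmodule.sub_mem hx.1 hx'.1
  have hfd_perp : f (x - x') ∈ perpSet (f '' D) := by
    rw [hanti.map_sub hx.1 hx'.1, ← sub_sub_sub_cancel_right (f x) (f x') y]
    exact (perpSubmodule _).sub_mem hx.2.2 hx'.2.2
  have hker : x - x' ∈ opKer D f :=
    ⟨hdD, eq_zero_of_mem_of_mem_perpSet (Set.mem_image_of_mem f hdD) hfd_perp⟩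
  exact sub_eq_zero.mp (eq_zero_of_mem_of_mem_perpSet hker
    ((perpSubmodule _).sub_mem hx.2.1 hx'.2.1))

theorem pinvFun_eq (hsub : IsLinSubspace D) (hanti : AntilinearOn D f) {y : F} {x : E}
    (hx : IsPinvValue D f y x) : pinvFun D f y = x := by
  have h : ∃ x, x ∈ D ∧ x ∈ nullPerp D f ∧ f x - y ∈ perpSet (f '' D) := ⟨x, hx⟩
  rw [pinvFun, dif_pos h]
  exact IsPinvValue.unique hsub hanti h.choose_spec hx

theorem pinvFun_spec [CompleteSpace E] (hsub : IsLinSubspace D) (hanti : AntilinearOn D f)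
    (hclosed : HasClosedGraph D f) {y : F} (hy : y ∈ pinvDom D f) :
    IsPinvValue D f y (pinvFun D f y) := by
  obtain ⟨_, ⟨x, hx, rfl⟩, p, hp, rfl⟩ := hy
  obtain ⟨z, ⟨hzD, hz⟩, n, hn, rfl⟩ := (mem_iff_exists_add hsub hanti hclosed).1 hx
  have hval : IsPinvValue D f (f (z + n) + p) z := by
    refine ⟨hzD, hz, ?_⟩
    rw [hanti.map_add hzD hn.1, hn.2, add_zero, sub_add_cancel_left]
    exact (perpSubmodule _).neg_mem hp
  rwa [pinvFun_eq hsub hanti hval]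

theorem pinvDom_isLinSubspace (hsub : IsLinSubspace D) (hanti : AntilinearOn D f) :
    IsLinSubspace (pinvDom D f) := by
  refine ⟨⟨0, ⟨0, hsub.1, hanti.map_zero hsub⟩, 0, (perpSubmodule _).zero_mem, by simp⟩, ?_⟩
  rintro a _ _ ⟨_, ⟨x, hx, rfl⟩, p, hp, rfl⟩ ⟨_, ⟨x', hx', rfl⟩, p', hp', rfl⟩
  refine ⟨f (starRingEnd ℂ a • x + x'), ⟨_, hsub.2 _ x x' hx hx', rfl⟩, a • p + p',
    (perpSubmodule _).add_mem ((perpSubmodule _).smul_mem a hp) hp', ?_⟩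
  rw [hanti _ x x' hx hx', Complex.conj_conj]
  module

theorem pinvFun_antilinearOn [CompleteSpace E] (hsub : IsLinSubspace D)
    (hanti : AntilinearOn D f) (hclosed : HasClosedGraph D f) :
    AntilinearOn (pinvDom D f) (pinvFun D f) := by
  intro a y y' hy hy'
  obtain ⟨hxD, hxN, hxR⟩ := pinvFun_spec hsub hanti hclosed hy
  obtain ⟨hxD', hxN', hxR'⟩ := pinvFun_spec hsub hanti hclosed hy'
  refine pinvFun_eq hsub hanti ⟨hsub.2 _ _ _ hxD hxD', (perpSubmodule _).add_mem
    ((perpSubmodule _).smul_mem _ hxN) hxN', ?_⟩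
  have : f (starRingEnd ℂ a • pinvFun D f y + pinvFun D f y') - (a • y + y')
      = a • (f (pinvFun D f y) - y) + (f (pinvFun D f y') - y') := by
    rw [hanti _ _ _ hxD hxD', Complex.conj_conj]
    module
  rw [this]
  exact (perpSubmodule _).add_mem ((perpSubmodule _).smul_mem a hxR) hxR'

theorem image_pinvFun [CompleteSpace E] (hsub : IsLinSubspace D) (hanti : AntilinearOn D f)
    (hclosed : HasClosedGraph D f) : pinvFun D f '' pinvDom D f = D ∩ nullPerp D f := by
  ext x
  constructor
  · rintro ⟨y, hy, rfl⟩
    obtain ⟨hxD, hxN, -⟩ := pinvFun_spec hsub hanti hclosed hy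
    exact ⟨hxD, hxN⟩
  · rintro ⟨hxD, hxN⟩
    refine ⟨f x, apply_mem_pinvDom hxD, pinvFun_eq hsub hanti ⟨hxD, hxN, ?_⟩⟩
    rw [sub_self]
    exact (perpSubmodule _).zero_mem

theorem opKer_pinvFun [CompleteSpace E] (hsub : IsLinSubspace D) (hanti : AntilinearOn D f)
    (hclosed : HasClosedGraph D f) : opKer (pinvDom D f) (pinvFun D f) = perpSet (f '' D) := by
  ext y
  constructor
  · rintro ⟨hy, hy0⟩
    have hR := (pinvFun_spec hsub hanti hclosed hy).2.2
    rw [hy0, hanti.map_zero hsub, zero_sub] at hR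
    simpa using (perpSubmodule _).neg_mem hR
  · intro hy
    have hval : IsPinvValue D f y 0 := by
      refine ⟨hsub.1, (perpSubmodule _).zero_mem, ?_⟩
      rw [hanti.map_zero hsub, zero_sub]
      exact (perpSubmodule _).neg_mem hy
    exact ⟨⟨0, ⟨0, hsub.1, hanti.map_zero hsub⟩, y, hy, (zero_add y).symm⟩,
      pinvFun_eq hsub hanti hval⟩

theorem perpSet_inter_nullPerp [CompleteSpace E] (hsub : IsLinSubspace D)
    (hanti : AntilinearOn D f) (hclosed : HasClosedGraph D f) (hdense : Dense D) :
    perpSet (D ∩ nullPerp D f) = opKer D f := by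
  ext y
  refine ⟨fun hy => ?_, fun hn z hz => inner_eq_zero_of_mem_perpSet hz.2 hn⟩
  obtain ⟨n, hn, w, hw, rfl⟩ := exists_add_mem_opKer_mem_nullPerp hsub hanti hclosed y
  have hwD : w ∈ perpSet D := by
    intro x hx
    obtain ⟨z, hz, m, hm, rfl⟩ := (mem_iff_exists_add hsub hanti hclosed).1 hx
    have hzw : (inner ℂ z w : ℂ) = 0 := by
      simpa [inner_add_right, inner_eq_zero_of_mem_perpSet hz.2 hn] using hy z hz
    rw [inner_add_left, hzw, hw m hm, add_zero]
  rwa [eq_zero_of_mem_perpSet_of_dense hdense hwD, add_zero]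

theorem pinvFun_apply_sub_mem_opKer [CompleteSpace E] (hsub : IsLinSubspace D)
    (hanti : AntilinearOn D f) (hclosed : HasClosedGraph D f) {x : E} (hx : x ∈ D) :
    pinvFun D f (f x) - x ∈ opKer D f := by
  obtain ⟨z, ⟨hzD, hz⟩, n, hn, rfl⟩ := (mem_iff_exists_add hsub hanti hclosed).1 hx
  have hval : IsPinvValue D f (f (z + n)) z := by
    refine ⟨hzD, hz, ?_⟩
    rw [hanti.map_add hzD hn.1, hn.2, add_zero, sub_self]
    exact (perpSubmodule _).zero_mem
  rw [pinvFun_eq hsub hanti hval, sub_add_cancel_left]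
  exact (opKerSubmodule hsub hanti).neg_mem hn

end Operator

end

/-- For a densely defined closed antilinear operator `T = (D, f)` from `H`
to `K`, the Moore–Penrose inverse of the Moore–Penrose inverse of `T` is `T` itself:
`(T†)† = T`. -/
theorem pinv_pinv_eq_self
    (D : Set H) (f : H → K)
    (hsub : IsLinSubspace D) (hanti : AntilinearOn D f) (hdense : Dense D)
    (hclosed : HasClosedGraph D f) :
    pinvDom (pinvDom D f) (pinvFun D f) = D ∧
    ∀ x ∈ D, pinvFun (pinvDom D f) (pinvFun D f) x = f x := by
  have hM := image_pinvFun hsub hanti hclosed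
  have hMperp := perpSet_inter_nullPerp hsub hanti hclosed hdense
  refine ⟨?_, fun x hx => ?_⟩
  · ext x
    rw [mem_iff_exists_add hsub hanti hclosed, ← hMperp, ← hM]
    rfl
  · refine pinvFun_eq (pinvDom_isLinSubspace hsub hanti) (pinvFun_antilinearOn hsub hanti hclosed)
      ⟨apply_mem_pinvDom hx, ?_, ?_⟩
    · change f x ∈ perpSet (opKer _ _)
      rw [opKer_pinvFun hsub hanti hclosed]
      exact mem_perpSet_perpSet ⟨x, hx, rfl⟩
    · rw [hM, hMperp]
      exact pinvFun_apply_sub_mem_opKer hsub hanti hclosed hx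
end
end
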